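/- arXiv:2106.16197 — 3 statements merged into one kernel-verified Lean document; each statement's English description precedes it below -/
import Mathlib

section
/- Let n ≥ 1, let v₀ be a real n-dimensional column vector, and let A₁,…,A_k be real n×n matrices. With aug and the augmentation A ↦ A' defined as follows — aug(v) is the (n+1)-dimensional vector whose first n entries are those of v and whose last entry is 1 − ζ(v); A' is the (n+1)×(n+1) matrix whose top-left n×n block is A, whose last column is (0,…,0,1)ᵀ, and whose last row has j-th entry (j ≤ n) equal to 1 − ζ(c_j) for c_j the j-th column of A — we have A_k' A_{k−1}' ⋯ A₁' · aug(v₀) = aug(A_k A_{k−1} ⋯ A₁ · v₀). -/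
open Matrix

/-- `ζ(v)`: the sum of all entries of a vector `v`. -/
noncomputable def zeta {n : ℕ} (v : Fin n → ℝ) : ℝ := ∑ i, v i

/-- The augmentation of an `n`-dimensional real vector `v`: the `(n+1)`-dimensional
vector whose first `n` entries are those of `v` and whose last entry is `1 − ζ(v)`. -/
noncomputable def augV {n : ℕ} (v : Fin n → ℝ) : Fin (n + 1) → ℝ :=
  Fin.snoc v (1 - zeta v)

/-- The augmentation of an `n × n` real matrix `A`: the `(n+1) × (n+1)` matrix whose
top-left `n × n` block is `A`, whose last column is `(0, …, 0, 1)ᵀ`, and whose last row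
has `j`-th entry (for `j ≤ n`) equal to `1 − ζ(c_j)`, where `c_j` is the `j`-th column
of `A`. -/
noncomputable def augM {n : ℕ} (A : Matrix (Fin n) (Fin n) ℝ) :
    Matrix (Fin (n + 1)) (Fin (n + 1)) ℝ :=
  Matrix.of fun i j =>
    Fin.lastCases
      (Fin.lastCases 1 (fun j' => 1 - zeta (fun r => A r j')) j)
      (fun i' => Fin.lastCases 0 (fun j' => A i' j') j) i

/-! A single augmented matrix already sends `aug v` to `aug (A v)`: the first `n` entries
agree by construction, and the last entry is `1 − ζ(A v)` because `ζ(A v) = Σⱼ ζ(cⱼ) vⱼ`.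
The product statement follows by induction on the list. -/

theorem zeta_mulVec {n : ℕ} (A : Matrix (Fin n) (Fin n) ℝ) (v : Fin n → ℝ) :
    zeta (A *ᵥ v) = ∑ j, zeta (fun i => A i j) * v j := by
  simp only [zeta, mulVec, dotProduct, Finset.sum_mul]
  exact Finset.sum_comm

theorem augM_mulVec_augV {n : ℕ} (A : Matrix (Fin n) (Fin n) ℝ) (v : Fin n → ℝ) :
    augM A *ᵥ augV v = augV (A *ᵥ v) := by
  funext i
  induction i using Fin.lastCases with
  | last =>
    simp only [mulVec, dotProduct, Fin.sum_univ_castSucc, augM, augV, of_apply,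
      Fin.lastCases_last, Fin.lastCases_castSucc, Fin.snoc_castSucc, Fin.snoc_last]
    rw [zeta_mulVec]
    simp only [zeta, sub_mul, one_mul, Finset.sum_sub_distrib]
    ring
  | cast i =>
    simp [mulVec, dotProduct, Fin.sum_univ_castSucc, augM, augV]

theorem augM_prod_mulVec_augV_general {n : ℕ} (v₀ : Fin n → ℝ)
    (As : List (Matrix (Fin n) (Fin n) ℝ)) :
    (As.map augM).prod *ᵥ augV v₀ = augV (As.prod *ᵥ v₀) := by
  induction As with
  | nil => simp
  | cons A As ih =>
    simp only [List.map_cons, List.prod_cons, ← mulVec_mulVec, ih, augM_mulVec_augV]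

/-- For a list of matrices `As = [A_k, A_{k−1}, …, A₁]` (so that `As.prod = A_k ⋯ A₁`),
we have `A_k' A_{k−1}' ⋯ A₁' · aug(v₀) = aug(A_k A_{k−1} ⋯ A₁ · v₀)`. -/
theorem augM_prod_mulVec_augV {n : ℕ} (hn : 1 ≤ n) (v₀ : Fin n → ℝ)
    (As : List (Matrix (Fin n) (Fin n) ℝ)) :
    (As.map augM).prod *ᵥ augV v₀ = augV (As.prod *ᵥ v₀) :=
  augM_prod_mulVec_augV_general v₀ As
end

section
/- Fix integers m ≥ 0 and t ≥ 1. Define the 3×3 real matrices A_¢ = [[1,0,0],[m,1,0],[−m,0,1]], A_a = [[1,0,0],[−1,1,0],[1,0,1]], and A_$ = [[1,−t,−t],[0,t,0],[0,0,t]], and for l ≥ 0 let v_f(l) = A_$ · (A_a)^l · A_¢ · (1,0,0)ᵀ. Then the acceptance probability |v_f(l)[1]| / (|v_f(l)[1]| + |v_f(l)[2]| + |v_f(l)[3]|) equals 1 when l = m, and is at most 1/(2t+1) when l ≠ m. (Hence the language COUNT_m = {a^m} is recognized by a 3-state affine finite automaton with negative one-sided error bound 1/(2t+1).) -/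
open Matrix

/-- The affine operator applied on the left end-marker `¢`. -/
noncomputable def AcentC (m : ℕ) : Matrix (Fin 3) (Fin 3) ℝ :=
  !![1, 0, 0; (m : ℝ), 1, 0; -(m : ℝ), 0, 1]

/-- The affine operator applied on each input symbol `a`. -/
noncomputable def AaC : Matrix (Fin 3) (Fin 3) ℝ :=
  !![1, 0, 0; -1, 1, 0; 1, 0, 1]

/-- The affine operator applied on the right end-marker `$`. -/
noncomputable def AdollarC (t : ℤ) : Matrix (Fin 3) (Fin 3) ℝ :=
  !![1, -(t : ℝ), -(t : ℝ); 0, (t : ℝ), 0; 0, 0, (t : ℝ)]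

/-- The final affine state on the input `a^l`. -/
noncomputable def vfC (m : ℕ) (t : ℤ) (l : ℕ) : Fin 3 → ℝ :=
  (AdollarC t * AaC ^ l * AcentC m) *ᵥ ![1, 0, 0]

/-- The acceptance probability (accepting state: the first state). -/
noncomputable def probC (m : ℕ) (t : ℤ) (l : ℕ) : ℝ :=
  |vfC m t l 0| / (|vfC m t l 0| + |vfC m t l 1| + |vfC m t l 2|)

/-! Each `a` moves one unit from the second coordinate to the third, so after `¢ a^l` the state is
`(1, m - l, l - m)`. The end-marker `$` scales the last two coordinates by `t` and leaves the first
at `1` because they sum to `0`, so the acceptance probability is `1 / (1 + 2 |t| |m - l|)`. -/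

theorem AaC_pow (l : ℕ) : AaC ^ l = !![1, 0, 0; -(l : ℝ), 1, 0; (l : ℝ), 0, 1] := by
  induction l with
  | zero => simp [one_fin_three]
  | succ n ih =>
    rw [pow_succ, ih, AaC]
    ext i j
    fin_cases i <;> fin_cases j <;> simp [mul_apply, Fin.sum_univ_three]; ring

theorem vfC_eq (m : ℕ) (t : ℤ) (l : ℕ) :
    vfC m t l = ![1, (t : ℝ) * ((m : ℝ) - l), (t : ℝ) * ((l : ℝ) - m)] := by
  rw [vfC, AaC_pow]
  ext i
  fin_cases i <;>
    simp [AdollarC, AcentC, mulVec, mul_apply, dotProduct, Fin.sum_univ_three] <;> ring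

theorem probC_eq (m : ℕ) (t : ℤ) (l : ℕ) :
    probC m t l = 1 / (1 + 2 * |(t : ℝ)| * |(m : ℝ) - l|) := by
  have h : |(t : ℝ) * ((l : ℝ) - m)| = |(t : ℝ)| * |(m : ℝ) - l| := by
    rw [abs_mul, abs_sub_comm]
  simp only [probC, vfC_eq, Matrix.cons_val, abs_one, h, abs_mul]
  ring

theorem one_le_abs_natCast_sub_natCast {m l : ℕ} (h : m ≠ l) : 1 ≤ |(m : ℝ) - l| := by
  have hz : ((m : ℤ) - l) ≠ 0 := sub_ne_zero.mpr (by exact_mod_cast h)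
  exact_mod_cast Int.one_le_abs hz

/-- The acceptance probability equals `1` when `l = m`, and is at most `1/(2t+1)`
when `l ≠ m`: the language `COUNT_m = {a^m}` is recognized by a 3-state AfA with
negative one-sided error bound `1/(2t+1)`. -/
theorem count_recognized_with_one_sided_error (m : ℕ) (t : ℤ) (ht : 1 ≤ t) (l : ℕ) :
    (l = m → probC m t l = 1) ∧
    (l ≠ m → probC m t l ≤ 1 / (2 * (t : ℝ) + 1)) := by
  have ht' : (1 : ℝ) ≤ t := by exact_mod_cast ht
  rw [probC_eq, abs_of_pos (by linarith)]
  refine ⟨fun hlm => by simp [hlm], fun hlm => ?_⟩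
  have hd := one_le_abs_natCast_sub_natCast (Ne.symm hlm)
  exact one_div_le_one_div_of_le (by positivity) (by nlinarith)
end

section
/- Let L be a language recognized by an n-state nondeterministic finite automaton, where n > 1, and let t ≥ 1 be an integer. Then there is an (n+1)-state affine finite automaton M (with real transition matrices whose columns each sum to 1, an initial affine state, and accepting state set {s₁, s₂}) such that every x ∈ L is accepted by M with probability at least 2t/(2t+1) and every x ∉ L is accepted by M with probability 0. In other words, L is recognized by an (n+1)-state AfA with positive one-sided error bound 1/(2t+1), which can be made arbitrarily small. -/
/-!
The affine automaton runs the NFA's 0/1 transition matrices on its first `n` states, so that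
after reading `x` they hold the numbers of computation paths ending in each state; an extra
last state absorbs `1 -` (column sum), which makes every operator affine. The right end-marker
sends `t` times the number `c` of accepting paths to `s₁` and `-t c` to `s₂`, and the entry sum
`1` to the extra state. The acceptance probability is then `2tc / (2tc + 1)`: it is `0` exactly
when `c = 0`, and at least `2t / (2t + 1)` when `c ≥ 1`.
-/

open Matrix

/-- A nondeterministic finite automaton with `n` states over alphabet `α`:
a transition function `δ`, an initial state, and a set of accepting states. -/
structure NFAb (α : Type) (n : ℕ) where
  δ : Fin n → α → Finset (Fin n)
  start : Fin n
  accept : Finset (Fin n)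

/-- `q` is a complete nondeterministic computation path of the transition function `δ`
on the input string `x`: `q_r ∈ δ(q_{r−1}, x_r)` for all `1 ≤ r ≤ |x|`. -/
def IsPath {α : Type} {n : ℕ} (δ : Fin n → α → Finset (Fin n))
    (x : List α) (q : Fin (x.length + 1) → Fin n) : Prop :=
  ∀ r : Fin x.length, q r.succ ∈ δ (q r.castSucc) (x.get r)

/-- The NFA accepts `x` if some computation path on `x` starting at the initial state
ends in an accepting state. -/
def NFAb.Accepts {α : Type} {n : ℕ} (M : NFAb α n) (x : List α) : Prop :=
  ∃ q : Fin (x.length + 1) → Fin n,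
    q 0 = M.start ∧ IsPath M.δ x q ∧ q (Fin.last x.length) ∈ M.accept

/-- The number of accepting nondeterministic computation paths of the NFA on `x`. -/
noncomputable def NFAb.accPathCount {α : Type} {n : ℕ} (M : NFAb α n) (x : List α) : ℕ :=
  Nat.card {q : Fin (x.length + 1) → Fin n //
    q 0 = M.start ∧ IsPath M.δ x q ∧ q (Fin.last x.length) ∈ M.accept}

/-- An affine finite automaton (AfA) with `N` states: an initial affine state (entry sum
`1`), an affine operator (each column summing to `1`) for the left end-marker `¢`, for
each input symbol, and for the right end-marker `$`, and a set of accepting states. -/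
structure AfA (α : Type) (N : ℕ) where
  init : Fin N → ℝ
  init_sum : ∑ i, init i = 1
  opL : Matrix (Fin N) (Fin N) ℝ
  op : α → Matrix (Fin N) (Fin N) ℝ
  opR : Matrix (Fin N) (Fin N) ℝ
  opL_affine : ∀ j, ∑ i, opL i j = 1
  op_affine : ∀ a j, ∑ i, op a i j = 1
  opR_affine : ∀ j, ∑ i, opR i j = 1
  accept : Finset (Fin N)

/-- The final state of the AfA on input `x`: the initial state multiplied by the
operators of `¢`, the input symbols, and `$`, in order. -/
noncomputable def AfA.final {α : Type} {N : ℕ} (M : AfA α N) (x : List α) : Fin N → ℝ :=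
  M.opR *ᵥ x.foldl (fun v a => M.op a *ᵥ v) (M.opL *ᵥ M.init)

/-- The acceptance probability of the AfA on input `x`: the sum of the absolute values
of the final-state entries at accepting states, divided by the ℓ₁-norm of the final
state. -/
noncomputable def AfA.prob {α : Type} {N : ℕ} (M : AfA α N) (x : List α) : ℝ :=
  (∑ i ∈ M.accept, |M.final x i|) / (∑ i, |M.final x i|)

lemma mulVec_ne_zero_iff {ι κ R : Type*} [Fintype κ] [Semiring R] [PartialOrder R]
    [CanonicallyOrderedAdd R] [NoZeroDivisors R] (A : Matrix ι κ R) (u : κ → R) (i : ι) :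
    (A *ᵥ u) i ≠ 0 ↔ ∃ k, A i k ≠ 0 ∧ u k ≠ 0 := by
  simp [mulVec, dotProduct, Finset.sum_eq_zero_iff]

section Paths

variable {α : Type} {n : ℕ} (δ : Fin n → α → Finset (Fin n))

lemma isPath_nil (q : Fin 1 → Fin n) : IsPath δ [] q :=
  fun r => r.elim0

lemma isPath_cons_iff (a : α) (x : List α) (q : Fin (x.length + 2) → Fin n) :
    IsPath δ (a :: x) q ↔ q 1 ∈ δ (q 0) a ∧ IsPath δ x (Fin.tail q) := by
  simp [IsPath, Fin.forall_fin_succ, Fin.tail]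

end Paths

namespace NFAb

variable {α : Type} {n : ℕ} (N : NFAb α n)

def transMatrix (a : α) : Matrix (Fin n) (Fin n) ℕ :=
  of fun i j => if i ∈ N.δ j a then 1 else 0

lemma transMatrix_ne_zero_iff (a : α) (i j : Fin n) :
    N.transMatrix a i j ≠ 0 ↔ i ∈ N.δ j a := by
  simp [transMatrix]

def countFrom (u : Fin n → ℕ) (x : List α) : Fin n → ℕ :=
  x.foldl (fun v a => N.transMatrix a *ᵥ v) u

lemma countFrom_ne_zero_iff (u : Fin n → ℕ) (x : List α) (i : Fin n) :
    N.countFrom u x i ≠ 0 ↔ ∃ q : Fin (x.length + 1) → Fin n,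
      u (q 0) ≠ 0 ∧ IsPath N.δ x q ∧ q (Fin.last x.length) = i := by
  induction x generalizing u with
  | nil =>
    exact ⟨fun h => ⟨fun _ => i, h, isPath_nil _ _, rfl⟩,
      fun ⟨q, h0, _, hl⟩ => hl ▸ h0⟩
  | cons a x ih =>
    rw [countFrom, List.foldl_cons, ← countFrom, ih]
    conv_rhs => rw [Fin.exists_fin_succ_pi]
    simp only [mulVec_ne_zero_iff, transMatrix_ne_zero_iff, isPath_cons_iff, Fin.cons_zero,
      Fin.cons_one, Fin.tail_cons, List.length_cons, ← Fin.succ_last, Fin.cons_succ]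
    grind

def pathCounts (x : List α) : Fin n → ℕ :=
  N.countFrom (Pi.single N.start 1) x

lemma accepts_iff_sum_pathCounts_ne_zero (x : List α) :
    N.Accepts x ↔ ∑ j ∈ N.accept, N.pathCounts x j ≠ 0 := by
  rw [Ne, Finset.sum_eq_zero_iff]
  simp only [not_forall, exists_prop, ← ne_eq, pathCounts, countFrom_ne_zero_iff]
  simp only [Pi.single_apply, ne_eq, ite_eq_right_iff, one_ne_zero, imp_false, not_not]
  exact ⟨fun ⟨q, h0, hp, hl⟩ => ⟨_, hl, q, h0, hp, rfl⟩,
    fun ⟨_, hj, q, h0, hp, hl⟩ => ⟨q, h0, hp, hl ▸ hj⟩⟩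

end NFAb

section AffineOperators

variable {ι κ R : Type*} [Fintype ι] [Fintype κ]

lemma sum_mulVec_of_sum_col_eq_one [Semiring R] (A : Matrix ι κ R) (hA : ∀ j, ∑ i, A i j = 1)
    (v : κ → R) : ∑ i, (A *ᵥ v) i = ∑ j, v j := by
  simp only [mulVec, dotProduct]
  rw [Finset.sum_comm]
  simp [← Finset.sum_mul, hA]

lemma sum_foldl_mulVec_of_sum_col_eq_one [Semiring R] {α : Type*} (A : α → Matrix ι ι R)
    (hA : ∀ a j, ∑ i, A a i j = 1) (x : List α) (v : ι → R) :
    ∑ i, x.foldl (fun w a => A a *ᵥ w) v i = ∑ i, v i := by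
  induction x generalizing v with
  | nil => rfl
  | cons a x ih => rw [List.foldl_cons, ih, sum_mulVec_of_sum_col_eq_one _ (hA a)]

lemma foldl_map_mulVec {S : Type*} [Semiring R] [Semiring S] {α : Type*} (f : R →+* S)
    (B : α → Matrix ι ι R) (x : List α) (u : ι → R) :
    x.foldl (fun v a => (B a).map f *ᵥ v) (f ∘ u)
      = f ∘ x.foldl (fun v a => B a *ᵥ v) u := by
  induction x generalizing u with
  | nil => rfl
  | cons a x ih =>
    rw [List.foldl_cons, List.foldl_cons, ← ih]
    exact congrArg (x.foldl _) (funext fun i => (RingHom.map_mulVec f (B a) u i).symm)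

end AffineOperators

section AffineExtend

variable {R : Type*} [Ring R] {n : ℕ}

def affineExtend (B : Matrix (Fin n) (Fin n) R) : Matrix (Fin (n + 1)) (Fin (n + 1)) R :=
  of fun i j => Fin.lastCases ((Pi.single (Fin.last n) 1 : Fin (n + 1) → R) i)
    (fun j => Fin.lastCases (1 - ∑ k, B k j) (fun i => B i j) i) j

lemma sum_affineExtend_col (B : Matrix (Fin n) (Fin n) R) (j : Fin (n + 1)) :
    ∑ i, affineExtend B i j = 1 := by
  induction j using Fin.lastCases with
  | last => simp [affineExtend]
  | cast j => simp [affineExtend, Fin.sum_univ_castSucc]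

lemma affineExtend_mulVec_castSucc (B : Matrix (Fin n) (Fin n) R) (w : Fin (n + 1) → R)
    (i : Fin n) : (affineExtend B *ᵥ w) i.castSucc = (B *ᵥ (w ∘ Fin.castSucc)) i := by
  simp [affineExtend, mulVec, dotProduct, Fin.sum_univ_castSucc, Pi.single_apply,
    (Fin.castSucc_lt_last i).ne]

lemma foldl_affineExtend_castSucc {α : Type*} (B : α → Matrix (Fin n) (Fin n) R) (x : List α)
    (w : Fin (n + 1) → R) (i : Fin n) :
    x.foldl (fun v a => affineExtend (B a) *ᵥ v) w i.castSucc
      = x.foldl (fun v a => B a *ᵥ v) (w ∘ Fin.castSucc) i := by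
  induction x generalizing w with
  | nil => rfl
  | cons a x ih =>
    rw [List.foldl_cons, ih, List.foldl_cons]
    exact congrArg (fun v => x.foldl (fun v a => B a *ᵥ v) v i)
      (funext (affineExtend_mulVec_castSucc (B a) w))

end AffineExtend

section AffineReadout

variable {ι R : Type*} [Fintype ι] [DecidableEq ι] [CommRing R]

def affineReadout (l : ι) (d g : ι → R) : Matrix ι ι R :=
  of fun i j => (Pi.single l 1 : ι → R) i + d i * g j

lemma sum_affineReadout_col (l : ι) {d : ι → R} (hd : ∑ i, d i = 0) (g : ι → R) (j : ι) :
    ∑ i, affineReadout l d g i j = 1 := by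
  simp [affineReadout, Finset.sum_add_distrib, ← Finset.sum_mul, hd]

lemma affineReadout_mulVec (l : ι) (d g w : ι → R) :
    affineReadout l d g *ᵥ w = (∑ i, w i) • Pi.single l 1 + (g ⬝ᵥ w) • d := by
  ext i
  simp only [affineReadout, mulVec, dotProduct, of_apply, add_mul, Finset.sum_add_distrib,
    mul_assoc, ← Finset.mul_sum, Pi.add_apply, Pi.smul_apply, smul_eq_mul]
  ring

end AffineReadout

lemma div_add_one_le_div_add_one {K : Type*} [Field K] [LinearOrder K] [IsStrictOrderedRing K]
    {a b : K} (ha : 0 ≤ a) (hab : a ≤ b) : a / (a + 1) ≤ b / (b + 1) := by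
  rw [div_le_div_iff₀ (by linarith) (by linarith)]
  linarith

lemma AfA.prob_eq_of_final_eq {α : Type} {m : ℕ} (M : AfA α m) (x : List α) {a b l : Fin m}
    (hab : a ≠ b) (hal : a ≠ l) (hbl : b ≠ l) (hacc : M.accept = {a, b}) {s : ℝ}
    (hs : 0 ≤ s)
    (hfinal : M.final x = Pi.single l 1 + s • (Pi.single a 1 - Pi.single b 1)) :
    M.prob x = 2 * s / (2 * s + 1) := by
  have habs : ∀ i, |M.final x i| = (Pi.single l 1 : Fin m → ℝ) i
      + (Pi.single a s : Fin m → ℝ) i + (Pi.single b s : Fin m → ℝ) i := by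
    intro i
    rw [hfinal]
    by_cases hia : i = a
    · subst hia; simp [hab, hal, abs_of_nonneg hs]
    by_cases hib : i = b
    · subst hib; simp [hab.symm, hbl, abs_of_nonneg hs]
    by_cases hil : i = l
    · subst hil; simp [hal.symm, hbl.symm]
    · simp [hia, hib, hil]
  simp only [AfA.prob, hacc, Finset.sum_pair hab, habs, Finset.sum_add_distrib,
    Finset.sum_pi_single', Finset.mem_univ, if_true]
  simp [hab, hal, hbl, hab.symm]
  ring_nf

namespace NFAb

variable {α : Type} {n : ℕ} (N : NFAb α n)

def acceptWeights (t : ℝ) : Fin (n + 1) → ℝ :=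
  Fin.snoc (fun j => if j ∈ N.accept then t else 0) 0

lemma acceptWeights_dotProduct (t : ℝ) (w : Fin (n + 1) → ℝ) :
    N.acceptWeights t ⬝ᵥ w = t * ∑ j ∈ N.accept, w j.castSucc := by
  simp [acceptWeights, dotProduct, Fin.sum_univ_castSucc, Finset.mul_sum, ite_mul]

@[simps]
noncomputable def toAfA (t : ℝ) : AfA α (n + 1) where
  init := Pi.single N.start.castSucc 1
  init_sum := by simp
  opL := 1
  op a := affineExtend ((N.transMatrix a).map (↑))
  opR := affineReadout (Fin.last n) (Pi.single 0 1 - Pi.single 1 1) (N.acceptWeights t)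
  opL_affine j := by simp [one_apply]
  op_affine a := sum_affineExtend_col _
  opR_affine := sum_affineReadout_col _ (by simp [Finset.sum_sub_distrib]) _
  accept := {0, 1}

lemma final_toAfA (t : ℝ) (x : List α) :
    (N.toAfA t).final x = Pi.single (Fin.last n) 1
      + (t * ↑(∑ j ∈ N.accept, N.pathCounts x j)) • (Pi.single 0 1 - Pi.single 1 1) := by
  simp only [AfA.final, toAfA_opL, toAfA_op, toAfA_opR, one_mulVec]
  set w : Fin (n + 1) → ℝ := x.foldl
    (fun v a => affineExtend ((N.transMatrix a).map (Nat.cast : ℕ → ℝ)) *ᵥ v)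
    (N.toAfA t).init
  have hsum : ∑ i, w i = 1 := by
    rw [sum_foldl_mulVec_of_sum_col_eq_one _ (fun a => sum_affineExtend_col _)]
    simp
  have hcounts (j : Fin n) : w j.castSucc = N.pathCounts x j := by
    simp only [w]
    have hinit :
        (N.toAfA t).init ∘ Fin.castSucc = Nat.castRingHom ℝ ∘ Pi.single N.start 1 := by
      funext k
      simp [Pi.single_apply]
    rw [foldl_affineExtend_castSucc, hinit]
    exact congrFun (foldl_map_mulVec (Nat.castRingHom ℝ) N.transMatrix x _) j
  rw [affineReadout_mulVec, hsum, acceptWeights_dotProduct]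
  simp [hcounts]

lemma prob_toAfA (hn : 1 < n) {t : ℝ} (ht : 0 ≤ t) (x : List α) :
    (N.toAfA t).prob x = 2 * (t * ↑(∑ j ∈ N.accept, N.pathCounts x j))
      / (2 * (t * ↑(∑ j ∈ N.accept, N.pathCounts x j)) + 1) :=
  (N.toAfA t).prob_eq_of_final_eq x (by simp [Fin.ext_iff]; omega) (by simp [Fin.ext_iff]; omega)
    (by simp [Fin.ext_iff, Nat.mod_eq_of_lt (show 1 < n + 1 by omega)]; omega) rfl
    (by positivity) (N.final_toAfA t x)

end NFAb

/-- If `L` is recognized by an `n`-state NFA with `n > 1` and `t ≥ 1` is an integer,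
then there is an `(n+1)`-state AfA with accepting states `{s₁, s₂}` that accepts every
`x ∈ L` with probability at least `2t/(2t+1)` and every `x ∉ L` with probability `0`:
`L` is recognized by an `(n+1)`-state AfA with positive one-sided error bound
`1/(2t+1)`, which can be made arbitrarily small. -/
theorem nfa_to_afa_one_sided_error {α : Type} (L : Set (List α)) (n : ℕ) (hn : 1 < n)
    (N : NFAb α n) (hrec : ∀ x, x ∈ L ↔ N.Accepts x) (t : ℤ) (ht : 1 ≤ t) :
    ∃ M : AfA α (n + 1), M.accept = {0, 1} ∧
      (∀ x ∈ L, 2 * (t : ℝ) / (2 * (t : ℝ) + 1) ≤ M.prob x) ∧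
      (∀ x ∉ L, M.prob x = 0) := by
  have ht0 : (0 : ℝ) ≤ t := by exact_mod_cast (by omega : (0 : ℤ) ≤ t)
  refine ⟨N.toAfA t, rfl, fun x hx => ?_, fun x hx => ?_⟩
  · have hc : (1 : ℝ) ≤ ↑(∑ j ∈ N.accept, N.pathCounts x j) := Nat.one_le_cast.mpr
      (Nat.one_le_iff_ne_zero.mpr ((N.accepts_iff_sum_pathCounts_ne_zero x).mp ((hrec x).mp hx)))
    rw [N.prob_toAfA hn ht0 x]
    exact div_add_one_le_div_add_one (by positivity)
      (mul_le_mul_of_nonneg_left (le_mul_of_one_le_right ht0 hc) zero_le_two)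
  · have hc : ∑ j ∈ N.accept, N.pathCounts x j = 0 :=
      not_not.mp (mt (N.accepts_iff_sum_pathCounts_ne_zero x).mpr (mt (hrec x).mpr hx))
    simp [N.prob_toAfA hn ht0 x, hc]
end
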